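/- For every sufficiently small β > 0 (it suffices that 2β ≤ ε_c), there exists α > 0 such that every α-pseudo-orbit (x_k)_{k∈ℤ} in 𝕋^d is β-shadowed by a unique point x ∈ 𝕋^d; that is, there is exactly one x ∈ 𝕋^d with d(x_k, A^k x) < β for all k ∈ ℤ. -/

import Mathlib

noncomputable section

open scoped BigOperators

/-- The integer lattice `ℤ^d` inside `ℝ^d`. -/
def intLattice (d : ℕ) : AddSubgroup (Fin d → ℝ) :=
  AddSubgroup.pi Set.univ fun _ => AddSubgroup.zmultiples (1 : ℝ)

/-- The torus `𝕋^d = ℝ^d / ℤ^d`. -/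
abbrev Torus (d : ℕ) := (Fin d → ℝ) ⧸ intLattice d

/-- The natural projection `p : ℝ^d → 𝕋^d`. -/
def Tproj (d : ℕ) : (Fin d → ℝ) →+ Torus d := QuotientAddGroup.mk' (intLattice d)

/-- The real matrix obtained from an integer matrix. -/
def matR {d : ℕ} (A : Matrix (Fin d) (Fin d) ℤ) : Matrix (Fin d) (Fin d) ℝ :=
  A.map (Int.cast : ℤ → ℝ)

lemma intLattice_mapsTo {d : ℕ} (A : Matrix (Fin d) (Fin d) ℤ) :
    intLattice d ≤ (intLattice d).comap (matR A).mulVecLin.toAddMonoidHom := by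
  intro x hx
  rw [AddSubgroup.mem_comap]
  rw [intLattice, AddSubgroup.mem_pi] at hx ⊢
  intro i _
  rw [AddSubgroup.mem_zmultiples_iff]
  choose k hk using fun j => AddSubgroup.mem_zmultiples_iff.mp (hx j (Set.mem_univ j))
  have hx' : ∀ j, (k j : ℝ) = x j := by
    intro j
    have := hk j
    rwa [zsmul_eq_mul, mul_one] at this
  refine ⟨∑ j, A i j * k j, ?_⟩
  rw [zsmul_eq_mul, mul_one]
  have : (matR A).mulVecLin.toAddMonoidHom x i = ∑ j, (A i j : ℝ) * x j := by
    simp [matR, Matrix.mulVecLin_apply, Matrix.mulVec, dotProduct]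
  rw [this]
  push_cast
  exact Finset.sum_congr rfl fun j _ => by rw [hx' j]

/-- The map on the torus induced by an integer matrix. -/
def tmap {d : ℕ} (A : Matrix (Fin d) (Fin d) ℤ) : Torus d →+ Torus d :=
  QuotientAddGroup.map (intLattice d) (intLattice d)
    (matR A).mulVecLin.toAddMonoidHom (intLattice_mapsTo A)

/-- `iterZ A B k` is the `k`-th power (`k ∈ ℤ`) of the toral automorphism induced by `A`,
where `B` is the integer inverse of `A`. -/
def iterZ {d : ℕ} (A B : Matrix (Fin d) (Fin d) ℤ) (k : ℤ) (x : Torus d) : Torus d :=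
  if 0 ≤ k then (⇑(tmap A))^[k.toNat] x else (⇑(tmap B))^[(-k).toNat] x

/-- The quotient "metric" on the torus induced by a norm `N` on `ℝ^d`. -/
def qdist {d : ℕ} (N : (Fin d → ℝ) → ℝ) (x y : Torus d) : ℝ :=
  sInf (N '' {v | Tproj d v = x - y})

/-- A norm on `ℝ^d` adapted to the hyperbolic matrix `A` (with integer inverse `B`),
together with the stable/unstable splitting. -/
structure AdaptedNorm (d : ℕ) (A B : Matrix (Fin d) (Fin d) ℤ) where
  N : (Fin d → ℝ) → ℝ
  Es : Submodule ℝ (Fin d → ℝ)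
  Eu : Submodule ℝ (Fin d → ℝ)
  compl : IsCompl Es Eu
  EsInvA : ∀ v ∈ Es, (matR A).mulVec v ∈ Es
  EuInvA : ∀ v ∈ Eu, (matR A).mulVec v ∈ Eu
  EsInvB : ∀ v ∈ Es, (matR B).mulVec v ∈ Es
  EuInvB : ∀ v ∈ Eu, (matR B).mulVec v ∈ Eu
  nonneg : ∀ v, 0 ≤ N v
  eq_zero_iff : ∀ v, N v = 0 ↔ v = 0
  norm_smul : ∀ (c : ℝ) (v), N (c • v) = |c| * N v
  triangle : ∀ v w, N (v + w) ≤ N v + N w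
  adapted : ∀ vs ∈ Es, ∀ vu ∈ Eu, N (vs + vu) = max (N vs) (N vu)
  lam : ℝ
  lam_nonneg : 0 ≤ lam
  lam_lt_one : lam < 1
  contract_s : ∀ v ∈ Es, N ((matR A).mulVec v) ≤ lam * N v
  contract_u : ∀ v ∈ Eu, N ((matR B).mulVec v) ≤ lam * N v
  cA : ℝ
  cB : ℝ
  boundA : ∀ v, N ((matR A).mulVec v) ≤ cA * N v
  boundB : ∀ v, N ((matR B).mulVec v) ≤ cB * N v

/-- Hyperbolicity: no complex eigenvalue of modulus 1. -/
def IsHyperbolic {d : ℕ} (A : Matrix (Fin d) (Fin d) ℤ) : Prop :=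
  ∀ z : ℂ, ((A.map (Int.cast : ℤ → ℂ)).charpoly).IsRoot z → ‖z‖ ≠ 1

/-- Local stable set `W^s_ε(x)` for the toral map induced by `A`
(taking `A` to be the inverse matrix gives the local unstable set). -/
def Wstable {d : ℕ} (A : Matrix (Fin d) (Fin d) ℤ) (N : (Fin d → ℝ) → ℝ) (ε : ℝ)
    (x : Torus d) : Set (Torus d) :=
  {y | ∀ n : ℕ, qdist N ((⇑(tmap A))^[n] x) ((⇑(tmap A))^[n] y) ≤ ε}

/-- A rectangle: a set of diameter at most `ε` stable under the local product `[x,y]`. -/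
def IsRectangle {d : ℕ} (A B : Matrix (Fin d) (Fin d) ℤ) (N : (Fin d → ℝ) → ℝ) (ε : ℝ)
    (R : Set (Torus d)) : Prop :=
  (∀ x ∈ R, ∀ y ∈ R, qdist N x y ≤ ε) ∧
  (∀ x ∈ R, ∀ y ∈ R, ∀ z, z ∈ Wstable A N ε x ∩ Wstable B N ε y → z ∈ R)

/-- A Markov partition for the toral automorphism induced by `A` (with inverse `B`). -/
structure IsMarkovPartition {d m : ℕ} (A B : Matrix (Fin d) (Fin d) ℤ)
    (N : (Fin d → ℝ) → ℝ) (ε : ℝ) (R : Fin m → Set (Torus d)) : Prop where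
  cover : (⋃ i, R i) = Set.univ
  rect : ∀ i, IsRectangle A B N ε (R i)
  proper : ∀ i, R i = closure (interior (R i))
  disj : ∀ i j, i ≠ j → interior (R i) ∩ interior (R j) = ∅
  markov_s : ∀ i j, ∀ x ∈ interior (R i), tmap A x ∈ interior (R j) →
      (⇑(tmap A)) '' (Wstable A N ε x ∩ R i) ⊆ Wstable A N ε (tmap A x) ∩ R j
  markov_u : ∀ i j, ∀ x ∈ interior (R i), tmap A x ∈ interior (R j) →
      Wstable B N ε (tmap A x) ∩ R j ⊆ (⇑(tmap A)) '' (Wstable B N ε x ∩ R i)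

/-- The adjacency relation of a Markov partition: `𝒜_{ij} = 1` iff
`int(R_i) ∩ A⁻¹(int(R_j)) ≠ ∅`. -/
def adjacent {d m : ℕ} (A : Matrix (Fin d) (Fin d) ℤ) (R : Fin m → Set (Torus d))
    (i j : Fin m) : Prop :=
  (interior (R i) ∩ (⇑(tmap A)) ⁻¹' interior (R j)).Nonempty

/-- The shift space `Ω` of bi-infinite admissible sequences. -/
def shiftSpace {d m : ℕ} (A : Matrix (Fin d) (Fin d) ℤ) (R : Fin m → Set (Torus d)) :
    Set (ℤ → Fin m) :=
  {ω | ∀ k : ℤ, adjacent A R (ω k) (ω (k + 1))}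

/-- The shift map `θ`. -/
def shiftMap {m : ℕ} (ω : ℤ → Fin m) : ℤ → Fin m := fun k => ω (k + 1)


open Matrix

-- auxiliary lemmas
section Aux
variable {d : ℕ}

lemma Tproj_surjective : Function.Surjective (Tproj d) :=
  QuotientAddGroup.mk'_surjective _

lemma qdist_le {N : (Fin d → ℝ) → ℝ} (hN : ∀ v, 0 ≤ N v) {x y : Torus d} {v : Fin d → ℝ}
    (hv : Tproj d v = x - y) : qdist N x y ≤ N v :=
  csInf_le ⟨0, by rintro a ⟨w, _, rfl⟩; exact hN w⟩ ⟨v, hv, rfl⟩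

lemma exists_lift_lt {N : (Fin d → ℝ) → ℝ} {x y : Torus d} {c : ℝ} (h : qdist N x y < c) :
    ∃ v, Tproj d v = x - y ∧ N v < c := by
  obtain ⟨w, hw⟩ := Tproj_surjective (d := d) (x - y)
  obtain ⟨a, ⟨v, hv, rfl⟩, hlt⟩ :=
    exists_lt_of_csInf_lt (s := N '' {v | Tproj d v = x - y}) ⟨N w, ⟨w, hw, rfl⟩⟩ h
  exact ⟨v, hv, hlt⟩

lemma tmap_mk (A : Matrix (Fin d) (Fin d) ℤ) (v : Fin d → ℝ) :
    tmap A (Tproj d v) = Tproj d ((matR A) *ᵥ v) :=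
  QuotientAddGroup.map_mk' _ _ _ _ v

lemma matR_mul (A B : Matrix (Fin d) (Fin d) ℤ) : matR (A * B) = matR A * matR B := by
  have : matR (A*B) = (A*B).map ⇑(Int.castRingHom ℝ) := rfl
  rw [this, Matrix.map_mul]; rfl

lemma matR_one : matR (1 : Matrix (Fin d) (Fin d) ℤ) = 1 := by
  ext i j
  simp [matR, Matrix.one_apply, apply_ite (Int.cast : ℤ → ℝ)]

lemma tmap_inv (A B : Matrix (Fin d) (Fin d) ℤ) (hBA : B * A = 1) (x : Torus d) :
    tmap B (tmap A x) = x := by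
  obtain ⟨v, rfl⟩ := Tproj_surjective x
  rw [tmap_mk, tmap_mk, Matrix.mulVec_mulVec, ← matR_mul, hBA, matR_one, Matrix.one_mulVec]

lemma iterZ_orbit (A B : Matrix (Fin d) (Fin d) ℤ) (hBA : B * A = 1) (y : ℤ → Torus d)
    (hy : ∀ k, tmap A (y k) = y (k + 1)) (k : ℤ) : iterZ A B k (y 0) = y k := by
  have hpos : ∀ n : ℕ, (⇑(tmap A))^[n] (y 0) = y n := by
    intro n; induction n with
    | zero => rfl
    | succ n ih =>
        rw [Function.iterate_succ_apply', ih, hy]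
        norm_num
  have hneg : ∀ n : ℕ, (⇑(tmap B))^[n] (y 0) = y (-n) := by
    intro n; induction n with
    | zero => simp
    | succ n ih =>
        have h := hy (-(n:ℤ)-1)
        rw [show (-(n:ℤ)-1+1) = -(n:ℤ) by ring] at h
        rw [Function.iterate_succ_apply', ih, ← h, tmap_inv A B hBA]
        congr 1; push_cast; ring
  rcases le_or_gt 0 k with hk | hk
  · rw [iterZ, if_pos hk, hpos k.toNat, Int.toNat_of_nonneg hk]
  · rw [iterZ, if_neg (not_le.mpr hk), hneg (-k).toNat,
      Int.toNat_of_nonneg (by omega : (0:ℤ) ≤ -k)]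
    norm_num
end Aux

section NormAux
variable {d : ℕ} {N : (Fin d → ℝ) → ℝ}
  (hN0 : ∀ v, 0 ≤ N v) (hNz : ∀ v, N v = 0 ↔ v = 0)
  (hNs : ∀ (c : ℝ) (v), N (c • v) = |c| * N v) (hNt : ∀ v w, N (v + w) ≤ N v + N w)

include hNz in
lemma N_zero : N (0 : Fin d → ℝ) = 0 := (hNz 0).mpr rfl

include hNs in
lemma N_neg (v : Fin d → ℝ) : N (-v) = N v := by
  have := hNs (-1) v
  simpa using this

include hNz hNt in
lemma N_sum_le {ι : Type*} (s : Finset ι) (f : ι → Fin d → ℝ) :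
    N (∑ i ∈ s, f i) ≤ ∑ i ∈ s, N (f i) := by
  classical
  induction s using Finset.induction with
  | empty => simp [N_zero hNz]
  | insert _ _ hx ih =>
      rw [Finset.sum_insert hx, Finset.sum_insert hx]
      exact le_trans (hNt _ _) (by linarith)

include hN0 hNz hNs hNt in
lemma N_le_norm : ∃ C : ℝ, 0 ≤ C ∧ ∀ v, N v ≤ C * ‖v‖ := by
  classical
  refine ⟨∑ i, N (Pi.single i 1), Finset.sum_nonneg fun i _ => hN0 _, fun v => ?_⟩
  have hv : v = ∑ i, (v i) • (Pi.single i (1:ℝ) : Fin d → ℝ) := by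
    conv_lhs => rw [← Finset.univ_sum_single v]
    refine Finset.sum_congr rfl fun i _ => ?_
    rw [← Pi.single_smul, smul_eq_mul, mul_one]
  calc N v = N (∑ i, (v i) • (Pi.single i (1:ℝ) : Fin d → ℝ)) := by rw [← hv]
    _ ≤ ∑ i, N ((v i) • (Pi.single i (1:ℝ) : Fin d → ℝ)) := N_sum_le hNz hNt _ _
    _ ≤ ∑ i, ‖v‖ * N (Pi.single i 1) := by
        refine Finset.sum_le_sum fun i _ => ?_
        rw [hNs]
        exact mul_le_mul_of_nonneg_right
          (by simpa [Real.norm_eq_abs] using norm_le_pi_norm v i) (hN0 _)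
    _ = (∑ i, N (Pi.single i 1)) * ‖v‖ := by rw [Finset.sum_mul]; exact Finset.sum_congr rfl fun i _ => mul_comm _ _

include hN0 hNz hNs hNt in
lemma N_continuous : Continuous N := by
  obtain ⟨C, hC, hb⟩ := N_le_norm hN0 hNz hNs hNt
  have key : ∀ x y : Fin d → ℝ, N x - N y ≤ C * ‖x - y‖ := by
    intro x y
    have h1 : N x ≤ N y + N (x - y) := by
      have := hNt y (x - y); simpa using this
    have := hb (x - y)
    linarith
  refine (LipschitzWith.of_dist_le_mul (K := C.toNNReal) fun x y => ?_).continuous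
  rw [Real.dist_eq, Real.coe_toNNReal C hC, dist_eq_norm]
  rw [abs_sub_le_iff]
  constructor
  · exact key x y
  · have := key y x
    rwa [show y - x = -(x-y) by ring, norm_neg] at this

include hN0 hNz hNs hNt in
lemma norm_le_N (hd : 1 ≤ d) : ∃ m : ℝ, 0 < m ∧ ∀ v, m * ‖v‖ ≤ N v := by
  have hcont := N_continuous hN0 hNz hNs hNt
  have hne : (Metric.sphere (0 : Fin d → ℝ) 1).Nonempty := by
    refine ⟨Pi.single ⟨0, hd⟩ 1, ?_⟩
    simp [Pi.norm_single]
  obtain ⟨v0, hv0, hmin⟩ :=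
    (isCompact_sphere (0 : Fin d → ℝ) 1).exists_isMinOn hne hcont.continuousOn
  have hv0norm : ‖v0‖ = 1 := by simpa using hv0
  have hv0ne : v0 ≠ 0 := by intro h; rw [h] at hv0norm; simp at hv0norm
  have hm : 0 < N v0 := lt_of_le_of_ne (hN0 _) fun h => hv0ne ((hNz v0).mp h.symm)
  refine ⟨N v0, hm, fun v => ?_⟩
  rcases eq_or_ne v 0 with rfl | hv
  · simp [N_zero hNz]
  · have hvn : (0:ℝ) < ‖v‖ := norm_pos_iff.mpr hv
    have hw : ‖v‖⁻¹ • v ∈ Metric.sphere (0 : Fin d → ℝ) 1 := by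
      simp [norm_smul, abs_of_pos (inv_pos.mpr hvn), inv_mul_cancel₀ hvn.ne']
    have := hmin hw
    have hNv : N v = ‖v‖ * N (‖v‖⁻¹ • v) := by
      rw [hNs, abs_of_pos (inv_pos.mpr hvn)]
      field_simp
    rw [hNv, mul_comm (N v0) ‖v‖]
    exact mul_le_mul_of_nonneg_left this hvn.le

include hN0 hNt in
lemma N_tsum_le (hcont : Continuous N) {f : ℕ → Fin d → ℝ} (hf : Summable f)
    {g : ℕ → ℝ} (hg : Summable g) (hle : ∀ n, N (f n) ≤ g n) (hNz : ∀ v, N v = 0 ↔ v = 0) :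
    N (∑' n, f n) ≤ ∑' n, g n := by
  have hg0 : ∀ n, 0 ≤ g n := fun n => le_trans (hN0 _) (hle n)
  have htend : Filter.Tendsto (fun n => N (∑ i ∈ Finset.range n, f i))
      Filter.atTop (nhds (N (∑' n, f n))) :=
    (hcont.tendsto _).comp hf.hasSum.tendsto_sum_nat
  refine le_of_tendsto' htend fun n => ?_
  calc N (∑ i ∈ Finset.range n, f i) ≤ ∑ i ∈ Finset.range n, N (f i) :=
        N_sum_le hNz hNt _ _
    _ ≤ ∑ i ∈ Finset.range n, g i := Finset.sum_le_sum fun i _ => hle i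
    _ ≤ ∑' i, g i := Summable.sum_le_tsum _ (fun i _ => hg0 i) hg
end NormAux

section PowAux
variable {d : ℕ}

lemma pow_contract (M : Matrix (Fin d) (Fin d) ℝ) (E : Submodule ℝ (Fin d → ℝ))
    (N : (Fin d → ℝ) → ℝ) (lam : ℝ)
    (hE : ∀ v ∈ E, M *ᵥ v ∈ E) (hc : ∀ v ∈ E, N (M *ᵥ v) ≤ lam * N v)
    (hlam : 0 ≤ lam) (hN0 : ∀ v, 0 ≤ N v)
    (v : Fin d → ℝ) (hv : v ∈ E) (n : ℕ) :
    (M ^ n) *ᵥ v ∈ E ∧ N ((M ^ n) *ᵥ v) ≤ lam ^ n * N v := by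
  induction n with
  | zero => simp [Matrix.one_mulVec, hv]
  | succ n ih =>
      have h1 : (M ^ (n+1)) *ᵥ v = M *ᵥ ((M ^ n) *ᵥ v) := by
        rw [Matrix.mulVec_mulVec, ← pow_succ']
      refine ⟨h1 ▸ hE _ ih.1, ?_⟩
      rw [h1]
      calc N (M *ᵥ ((M^n) *ᵥ v)) ≤ lam * N ((M^n) *ᵥ v) := hc _ ih.1
        _ ≤ lam * (lam^n * N v) := mul_le_mul_of_nonneg_left ih.2 hlam
        _ = lam^(n+1) * N v := by ring
end PowAux

/-- **Proposition 6.4** (shadowing): for every sufficiently small `β > 0` (`2β ≤ ε_c`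
suffices), there exists `α > 0` such that every `α`-pseudo-orbit is `β`-shadowed by a
unique point of the torus. -/
theorem statement9
    (d : ℕ) (hd : 1 ≤ d)
    (A B : Matrix (Fin d) (Fin d) ℤ) (hAB : A * B = 1) (hBA : B * A = 1)
    (hhyp : IsHyperbolic A)
    (𝔑 : AdaptedNorm d A B)
    (εc : ℝ) (hεc : 0 < εc)
    (hexp : ∀ x y : Torus d,
      (∀ k : ℤ, qdist 𝔑.N (iterZ A B k x) (iterZ A B k y) < εc) → x = y) :
    ∀ β : ℝ, 0 < β → 2 * β ≤ εc →
      ∃ α : ℝ, 0 < α ∧ ∀ xs : ℤ → Torus d,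
        (∀ k : ℤ, qdist 𝔑.N (tmap A (xs k)) (xs (k + 1)) < α) →
        ∃! x : Torus d, ∀ k : ℤ, qdist 𝔑.N (xs k) (iterZ A B k x) < β := by
  intro β hβ h2β
  obtain ⟨N, Es, Eu, compl, EsInvA, EuInvA, EsInvB, EuInvB, hN0, hNz, hNs, hNt,
    adapted, lam, hlam0, hlam1, contract_s, contract_u, cA, cB, _, _⟩ := 𝔑
  simp only at *
  have h1lam : (0:ℝ) < 1 - lam := by linarith
  set α := β * (1 - lam) / 2 with hα
  have hα0 : 0 < α := by positivity
  refine ⟨α, hα0, fun xs hxs => ?_⟩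
  obtain ⟨m, hm, hmle⟩ := norm_le_N hN0 hNz hNs hNt hd
  have hcont := N_continuous hN0 hNz hNs hNt
  -- choose lifts of the pseudo-orbit errors
  choose δ hδ hNδ using fun k => exists_lift_lt (hxs k)
  -- split them along the hyperbolic splitting
  have hsplit : ∀ k : ℤ, ∃ sk ∈ Es, ∃ uk ∈ Eu, sk + uk = δ k := fun k => by
    have : δ k ∈ Es ⊔ Eu := by rw [compl.sup_eq_top]; trivial
    exact Submodule.mem_sup.mp this
  choose s hs u hu hsu using hsplit
  have hNsu : ∀ k, N (s k) < α ∧ N (u k) < α := fun k => by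
    have h := adapted (s k) (hs k) (u k) (hu k)
    rw [hsu k] at h
    have h1 : N (s k) ≤ N (δ k) := h ▸ le_max_left _ _
    have h2 : N (u k) ≤ N (δ k) := h ▸ le_max_right _ _
    exact ⟨lt_of_le_of_lt h1 (hNδ k), lt_of_le_of_lt h2 (hNδ k)⟩
  set MA := matR A with hMA
  set MB := matR B with hMB
  have hABr : MA * MB = 1 := by rw [hMA, hMB, ← matR_mul, hAB, matR_one]
  -- iterated contraction
  have hApow := fun (k : ℤ) (n : ℕ) =>
    pow_contract MA Es N lam EsInvA contract_s hlam0 hN0 (s k) (hs k) n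
  have hBpow := fun (k : ℤ) (n : ℕ) =>
    pow_contract MB Eu N lam EuInvB contract_u hlam0 hN0 (u k) (hu k) n
  -- the three families of series terms
  set fs : ℤ → ℕ → (Fin d → ℝ) := fun k n => (MA ^ n) *ᵥ s (k - 1 - n) with hfs_def
  set fu : ℤ → ℕ → (Fin d → ℝ) := fun k n => (MB ^ (n+1)) *ᵥ u (k + n) with hfu_def
  set gu : ℤ → ℕ → (Fin d → ℝ) := fun k n => (MB ^ n) *ᵥ u (k + n) with hgu_def
  have hgeo : Summable fun n : ℕ => lam ^ n := summable_geometric_of_lt_one hlam0 hlam1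
  have hble : ∀ (n : ℕ) (c : ℝ), 0 ≤ c → c < α → lam ^ (n+1) * c ≤ α * lam ^ n := by
    intro n c hc hcα
    have h1 : lam ^ (n+1) ≤ lam ^ n := pow_le_pow_of_le_one hlam0 (by linarith) (by omega)
    have h2 : (0:ℝ) ≤ lam ^ n := pow_nonneg hlam0 n
    have h3 : (0:ℝ) ≤ lam ^ (n+1) := pow_nonneg hlam0 (n+1)
    nlinarith
  have hbs : ∀ k n, N (fs k n) ≤ α * lam ^ n := by
    intro k n
    refine le_trans (hApow (k-1-n) n).2 ?_
    have := (hNsu (k-1-n)).1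
    have h2 : (0:ℝ) ≤ lam ^ n := pow_nonneg hlam0 n
    nlinarith [hN0 (s (k-1-n))]
  have hbu : ∀ k n, N (fu k n) ≤ α * lam ^ n := by
    intro k n
    refine le_trans (hBpow (k+n) (n+1)).2 (hble n _ (hN0 _) (hNsu (k+n)).2)
  have hbg : ∀ k n, N (gu k n) ≤ α * lam ^ n := by
    intro k n
    refine le_trans (hBpow (k+n) n).2 ?_
    have := (hNsu (k+n)).2
    have h2 : (0:ℝ) ≤ lam ^ n := pow_nonneg hlam0 n
    nlinarith [hN0 (u (k+n))]
  -- summability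
  have hsumN : ∀ f : ℕ → (Fin d → ℝ), (∀ n, N (f n) ≤ α * lam ^ n) → Summable f := by
    intro f hf
    refine Summable.of_norm_bounded (g := fun n => (α/m) * lam ^ n) (hgeo.mul_left _) fun n => ?_
    have h1 := hmle (f n)
    have h2 := hf n
    show ‖f n‖ ≤ α / m * lam ^ n
    rw [div_mul_eq_mul_div, le_div_iff₀ hm]
    nlinarith
  have hsums := fun k => hsumN _ (hbs k)
  have hsumu := fun k => hsumN _ (hbu k)
  have hsumg := fun k => hsumN _ (hbg k)
  -- the correction vectors
  set vs : ℤ → (Fin d → ℝ) := fun k => ∑' n, fs k n with hvs_def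
  set vu : ℤ → (Fin d → ℝ) := fun k => ∑' n, fu k n with hvu_def
  set v : ℤ → (Fin d → ℝ) := fun k => vs k - vu k with hv_def
  -- norm bound on tsums
  have hNts : ∀ f : ℕ → (Fin d → ℝ), (∀ n, N (f n) ≤ α * lam ^ n) →
      N (∑' n, f n) ≤ β/2 := by
    intro f hf
    calc N (∑' n, f n) ≤ ∑' n, α * lam ^ n :=
          N_tsum_le hN0 hNt hcont (hsumN f hf) (hgeo.mul_left α) hf hNz
      _ = α * (1 - lam)⁻¹ := by rw [tsum_mul_left, tsum_geometric_of_lt_one hlam0 hlam1]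
      _ = β/2 := by rw [hα]; field_simp
  -- memberships of the tsums
  have hmemE : ∀ (E : Submodule ℝ (Fin d → ℝ)) (f : ℕ → (Fin d → ℝ)),
      Summable f → (∀ n, f n ∈ E) → (∑' n, f n) ∈ E := by
    intro E f hf hmem
    exact E.closed_of_finiteDimensional.mem_of_tendsto hf.hasSum.tendsto_sum_nat
      (Filter.Eventually.of_forall fun n => Submodule.sum_mem E fun i _ => hmem i)
  have hvsE : ∀ k, vs k ∈ Es := fun k =>
    hmemE Es _ (hsums k) fun n => (hApow (k-1-n) n).1
  have hvuE : ∀ k, vu k ∈ Eu := fun k =>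
    hmemE Eu _ (hsumu k) fun n => (hBpow (k+n) (n+1)).1
  -- norm bound on v
  have hNv : ∀ k, N (v k) ≤ β/2 := by
    intro k
    have h1 : N (vs k) ≤ β/2 := hNts _ (hbs k)
    have h2 : N (vu k) ≤ β/2 := hNts _ (hbu k)
    have h3 : v k = vs k + -(vu k) := by rw [hv_def]; ring_nf
    rw [h3, adapted (vs k) (hvsE k) (-(vu k)) (Eu.neg_mem (hvuE k)), N_neg hNs]
    exact max_le h1 h2
  -- the mulVec continuous linear map
  set L : (Fin d → ℝ) →L[ℝ] (Fin d → ℝ) :=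
    LinearMap.toContinuousLinearMap (Matrix.mulVecLin MA) with hL
  have hLapp : ∀ w, L w = MA *ᵥ w := fun w => rfl
  -- the recurrence
  have hrec_s : ∀ k, vs (k+1) = s k + MA *ᵥ vs k := by
    intro k
    have h0 : vs (k+1) = fs (k+1) 0 + ∑' n, fs (k+1) (n+1) := Summable.tsum_eq_zero_add (hsums (k+1))
    have h1 : fs (k+1) 0 = s k := by
      simp only [hfs_def, pow_zero, Matrix.one_mulVec]
      norm_num
    have h2 : ∀ n : ℕ, fs (k+1) (n+1) = MA *ᵥ fs k n := by
      intro n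
      simp only [hfs_def, Matrix.mulVec_mulVec, ← pow_succ']
      congr 2
      push_cast; ring
    rw [h0, h1]
    congr 1
    calc (∑' n, fs (k+1) (n+1)) = ∑' n, L (fs k n) := by
          refine tsum_congr fun n => ?_; rw [h2 n, hLapp]
      _ = L (∑' n, fs k n) := (L.map_tsum (hsums k)).symm
      _ = MA *ᵥ vs k := by rw [hLapp, hvs_def]
  have hrec_u : ∀ k, vu (k+1) = MA *ᵥ vu k - u k := by
    intro k
    have hAg : MA *ᵥ vu k = ∑' n, gu k n := by
      calc MA *ᵥ vu k = L (∑' n, fu k n) := by rw [hLapp, hvu_def]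
        _ = ∑' n, L (fu k n) := L.map_tsum (hsumu k)
        _ = ∑' n, gu k n := by
            refine tsum_congr fun n => ?_
            rw [hLapp]
            simp only [hfu_def, hgu_def, Matrix.mulVec_mulVec]
            congr 1
            rw [pow_succ', ← mul_assoc, hABr, one_mul]
    have h0 : (∑' n, gu k n) = gu k 0 + ∑' n, gu k (n+1) := Summable.tsum_eq_zero_add (hsumg k)
    have h1 : gu k 0 = u k := by
      simp only [hgu_def, pow_zero, Matrix.one_mulVec]
      norm_num
    have h2 : ∀ n : ℕ, gu k (n+1) = fu (k+1) n := by
      intro n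
      simp only [hgu_def, hfu_def]
      congr 2
      push_cast; ring
    have h3 : (∑' n, gu k (n+1)) = vu (k+1) := by
      rw [hvu_def]; exact tsum_congr fun n => h2 n
    rw [hAg, h0, h1, h3]
    ring
  have hrec : ∀ k, v (k+1) = MA *ᵥ v k + δ k := by
    intro k
    rw [hv_def]
    simp only
    rw [hrec_s k, hrec_u k, Matrix.mulVec_sub, ← hsu k]
    ring
  -- the shadowing orbit
  set Y : ℤ → Torus d := fun k => xs k + Tproj d (v k) with hY
  have horb : ∀ k, tmap A (Y k) = Y (k+1) := by
    intro k
    have h1 : tmap A (xs k) = xs (k+1) + Tproj d (δ k) := by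
      rw [hδ k]; abel
    calc tmap A (Y k) = tmap A (xs k) + tmap A (Tproj d (v k)) := map_add _ _ _
      _ = xs (k+1) + Tproj d (δ k) + Tproj d (MA *ᵥ v k) := by rw [h1, tmap_mk, hMA]
      _ = xs (k+1) + Tproj d (MA *ᵥ v k + δ k) := by rw [map_add]; abel
      _ = Y (k+1) := by rw [← hrec k]
  have hiter : ∀ k, iterZ A B k (Y 0) = Y k := iterZ_orbit A B hBA Y horb
  have hshadow : ∀ k, qdist N (xs k) (iterZ A B k (Y 0)) < β := by
    intro k
    rw [hiter k]
    have hlift : Tproj d (-(v k)) = xs k - Y k := by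
      rw [map_neg, hY]; show _ = xs k - (xs k + Tproj d (v k)); abel
    calc qdist N (xs k) (Y k) ≤ N (-(v k)) := qdist_le hN0 hlift
      _ = N (v k) := N_neg hNs _
      _ ≤ β/2 := hNv k
      _ < β := by linarith
  refine ⟨Y 0, hshadow, fun x' hx' => ?_⟩
  refine hexp x' (Y 0) fun k => ?_
  obtain ⟨w1, hw1, hNw1⟩ := exists_lift_lt (hx' k)
  obtain ⟨w2, hw2, hNw2⟩ := exists_lift_lt (hshadow k)
  have hlift : Tproj d (w2 - w1) = iterZ A B k x' - iterZ A B k (Y 0) := by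
    rw [map_sub, hw1, hw2]; abel
  calc qdist N (iterZ A B k x') (iterZ A B k (Y 0)) ≤ N (w2 - w1) := qdist_le hN0 hlift
    _ ≤ N w2 + N (-w1) := by rw [sub_eq_add_neg]; exact hNt _ _
    _ = N w2 + N w1 := by rw [N_neg hNs]
    _ < β + β := add_lt_add hNw2 hNw1
    _ ≤ εc := by linarith

end
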